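/- Let A ∈ ℝ^{n×n} be invertible, B ∈ ℝ^{n×p}, and let Y ∈ ℝ^{n×r} have full column rank r. Define M₁ = Yᵀ Y, A₁ = A Aᵀ + B Bᵀ Y Yᵀ Y Yᵀ B Bᵀ, M₂ = Yᵀ A Aᵀ Y + Yᵀ B Bᵀ Y Yᵀ Y Yᵀ B Bᵀ Y, and let ḡ(ξ, ζ) = Trace(ξᵀ A₁ ζ M₁) + Trace(ξᵀ ζ M₂) be the proposed metric on ℝ^{n×r}. Then for every G ∈ ℝ^{n×r} there is a unique ξ ∈ ℝ^{n×r} such that ḡ(ξ, ζ) = Trace(Gᵀ ζ) for all ζ ∈ ℝ^{n×r}, and this ξ is the unique solution of the linear equation A₁ ξ M₁ + ξ M₂ = G. (In particular, the Riemannian gradient with respect to ḡ is obtained from the Euclidean gradient G by solving this linear system.) -/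

import Mathlib

open Matrix

/-- The proposed metric `ḡ(ξ, ζ) = Trace(ξᵀ A₁ ζ M₁) + Trace(ξᵀ ζ M₂)`. -/
noncomputable def gbar {n p r : ℕ} (A : Matrix (Fin n) (Fin n) ℝ)
    (B : Matrix (Fin n) (Fin p) ℝ) (Y : Matrix (Fin n) (Fin r) ℝ)
    (ξ ζ : Matrix (Fin n) (Fin r) ℝ) : ℝ :=
  Matrix.trace (ξᵀ * (A * Aᵀ + B * Bᵀ * Y * Yᵀ * Y * Yᵀ * B * Bᵀ) * ζ * (Yᵀ * Y)) +
  Matrix.trace (ξᵀ * ζ * (Yᵀ * A * Aᵀ * Y + Yᵀ * B * Bᵀ * Y * Yᵀ * Y * Yᵀ * B * Bᵀ * Y))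

/-!
Moving the symmetric factors `A₁`, `M₁`, `M₂` across the trace gives
`ḡ(ξ, ζ) = ⟨A₁ ξ M₁ + ξ M₂, ζ⟩`, so `ξ` represents `G` exactly when `A₁ ξ M₁ + ξ M₂ = G`.
The operator `ξ ↦ A₁ ξ M₁ + ξ M₂` is injective, hence bijective: `ḡ(ξ, ξ)` is a sum of four
squared Frobenius norms, the first of which is `‖Aᵀ ξ Yᵀ‖²`, and this vanishes only for `ξ = 0`
because `A` and `Yᵀ Y` are invertible.
-/

namespace Matrix

variable {m n l : Type*} [Fintype m] [Fintype n]

theorem forall_trace_transpose_mul_eq_iff {R : Type*} [CommRing R] {X G : Matrix m n R} :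
    (∀ ζ : Matrix m n R, (Xᵀ * ζ).trace = (Gᵀ * ζ).trace) ↔ X = G := by
  rw [← transpose_inj, ext_iff_trace_mul_right]

theorem isUnit_of_rank_eq_card {K : Type*} [Field K] [DecidableEq n] {A : Matrix n n K}
    (h : A.rank = Fintype.card n) : IsUnit A := by
  have : LinearMap.range A.mulVecLin = ⊤ :=
    Submodule.eq_top_of_finrank_eq (by rw [← rank, h, Module.finrank_fintype_fun_eq_card])
  exact mulVec_surjective_iff_isUnit.mp (LinearMap.range_eq_top.mp this)

theorem isUnit_transpose_mul_self_of_rank_eq_card {K : Type*} [Field K] [LinearOrder K]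
    [IsStrictOrderedRing K] [DecidableEq n] {Y : Matrix m n K} (h : Y.rank = Fintype.card n) :
    IsUnit (Yᵀ * Y) :=
  isUnit_of_rank_eq_card (by rw [rank_transpose_mul_self, h])

section Sylvester

variable {R : Type*} [CommRing R]

def sylvesterMap (P : Matrix m m R) (Q M : Matrix n n R) : Matrix m n R →ₗ[R] Matrix m n R where
  toFun ξ := P * ξ * Q + ξ * M
  map_add' ξ ζ := by simp only [Matrix.mul_add, Matrix.add_mul]; abel
  map_smul' c ξ := by simp only [Matrix.mul_smul, Matrix.smul_mul, smul_add, RingHom.id_apply]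

theorem sylvesterMap_apply (P : Matrix m m R) (Q M : Matrix n n R) (ξ : Matrix m n R) :
    sylvesterMap P Q M ξ = P * ξ * Q + ξ * M :=
  rfl

theorem trace_transpose_sylvesterMap_mul {P : Matrix m m R} {Q M : Matrix n n R}
    (hP : P.IsSymm) (hQ : Q.IsSymm) (hM : M.IsSymm) (ξ ζ : Matrix m n R) :
    ((sylvesterMap P Q M ξ)ᵀ * ζ).trace = (ξᵀ * P * ζ * Q).trace + (ξᵀ * ζ * M).trace := by
  rw [sylvesterMap_apply, transpose_add, transpose_mul, transpose_mul, transpose_mul,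
    hP.eq, hQ.eq, hM.eq, Matrix.add_mul, trace_add, trace_mul_cycle (ξᵀ * P) ζ Q,
    trace_mul_cycle ξᵀ ζ M]

end Sylvester

theorem trace_transpose_mul_self_nonneg (X : Matrix m n ℝ) : 0 ≤ (Xᵀ * X).trace := by
  simpa using (posSemidef_conjTranspose_mul_self X).trace_nonneg

theorem trace_transpose_mul_self_eq_zero_iff {X : Matrix m n ℝ} :
    (Xᵀ * X).trace = 0 ↔ X = 0 := by
  simpa using trace_conjTranspose_mul_self_eq_zero_iff (A := X)

theorem trace_transpose_mul_self_mul_gram {R : Type*} [CommRing R] [Fintype l]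
    (X : Matrix m n R) (Q : Matrix l n R) :
    (Xᵀ * X * (Qᵀ * Q)).trace = ((X * Qᵀ)ᵀ * (X * Qᵀ)).trace := by
  simp only [transpose_mul, transpose_transpose, Matrix.mul_assoc]
  rw [trace_mul_comm Q]
  simp only [Matrix.mul_assoc]

end Matrix

section Metric

variable {n p r : ℕ} (A : Matrix (Fin n) (Fin n) ℝ) (B : Matrix (Fin n) (Fin p) ℝ)
  (Y : Matrix (Fin n) (Fin r) ℝ)

noncomputable def gbarOp : Matrix (Fin n) (Fin r) ℝ →ₗ[ℝ] Matrix (Fin n) (Fin r) ℝ :=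
  sylvesterMap (A * Aᵀ + B * Bᵀ * Y * Yᵀ * Y * Yᵀ * B * Bᵀ) (Yᵀ * Y)
    (Yᵀ * A * Aᵀ * Y + Yᵀ * B * Bᵀ * Y * Yᵀ * Y * Yᵀ * B * Bᵀ * Y)

theorem gbar_eq_trace_gbarOp (ξ ζ : Matrix (Fin n) (Fin r) ℝ) :
    gbar A B Y ξ ζ = ((gbarOp A B Y ξ)ᵀ * ζ).trace := by
  refine (trace_transpose_sylvesterMap_mul ?_ ?_ ?_ ξ ζ).symm <;>
    simp only [IsSymm, transpose_add, transpose_mul, transpose_transpose, Matrix.mul_assoc]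

theorem gbar_self_eq (ξ : Matrix (Fin n) (Fin r) ℝ) :
    gbar A B Y ξ ξ =
      ((Aᵀ * ξ * Yᵀ)ᵀ * (Aᵀ * ξ * Yᵀ)).trace +
      ((Y * Yᵀ * B * Bᵀ * ξ * Yᵀ)ᵀ * (Y * Yᵀ * B * Bᵀ * ξ * Yᵀ)).trace +
      ((ξ * Yᵀ * A)ᵀ * (ξ * Yᵀ * A)).trace +
      ((ξ * Yᵀ * B * Bᵀ * Y * Yᵀ)ᵀ * (ξ * Yᵀ * B * Bᵀ * Y * Yᵀ)).trace := by
  have h₁ := trace_transpose_mul_self_mul_gram (Aᵀ * ξ) Y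
  have h₂ := trace_transpose_mul_self_mul_gram (Y * Yᵀ * B * Bᵀ * ξ) Y
  have h₃ := trace_transpose_mul_self_mul_gram ξ (Aᵀ * Y)
  have h₄ := trace_transpose_mul_self_mul_gram ξ (Y * Yᵀ * B * Bᵀ * Y)
  simp only [transpose_mul, transpose_transpose, Matrix.mul_assoc] at h₁ h₂ h₃ h₄ ⊢
  simp only [gbar, Matrix.mul_add, Matrix.add_mul, trace_add, Matrix.mul_assoc, h₁, h₂, h₃, h₄]
  ring

variable {A Y}

theorem eq_zero_of_gbar_self_eq_zero (hA : IsUnit A) (hY : Y.rank = r)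
    {ξ : Matrix (Fin n) (Fin r) ℝ} (h : gbar A B Y ξ ξ = 0) : ξ = 0 := by
  rw [gbar_self_eq] at h
  have hAξY : Aᵀ * ξ * Yᵀ = 0 := by
    refine trace_transpose_mul_self_eq_zero_iff.mp
      (le_antisymm ?_ (trace_transpose_mul_self_nonneg _))
    linarith [trace_transpose_mul_self_nonneg (Y * Yᵀ * B * Bᵀ * ξ * Yᵀ),
      trace_transpose_mul_self_nonneg (ξ * Yᵀ * A),
      trace_transpose_mul_self_nonneg (ξ * Yᵀ * B * Bᵀ * Y * Yᵀ)]
  have hξY : ξ * Yᵀ = 0 := by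
    have hAt : IsUnit Aᵀ.det := by rwa [det_transpose, ← isUnit_iff_isUnit_det]
    rw [← nonsing_inv_mul_cancel_left _ (ξ * Yᵀ) hAt, ← Matrix.mul_assoc Aᵀ, hAξY, Matrix.mul_zero]
  have hYtY : IsUnit (Yᵀ * Y).det :=
    (isUnit_iff_isUnit_det _).mp (isUnit_transpose_mul_self_of_rank_eq_card (by simpa using hY))
  calc ξ = ξ * (Yᵀ * Y) * (Yᵀ * Y)⁻¹ := (mul_nonsing_inv_cancel_right _ _ hYtY).symm
    _ = 0 := by rw [← Matrix.mul_assoc, hξY, Matrix.zero_mul, Matrix.zero_mul]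

theorem gbarOp_bijective (hA : IsUnit A) (hY : Y.rank = r) :
    Function.Bijective (gbarOp A B Y) := by
  have hinj : Function.Injective (gbarOp A B Y) := by
    refine (injective_iff_map_eq_zero _).mpr fun ξ hξ => eq_zero_of_gbar_self_eq_zero B hA hY ?_
    rw [gbar_eq_trace_gbarOp, hξ, transpose_zero, Matrix.zero_mul, trace_zero]
  exact ⟨hinj, LinearMap.surjective_of_injective hinj⟩

end Metric

/-- For every Euclidean gradient `G`, there is a unique `ξ` representing `G` in the metric
`ḡ` (i.e. `ḡ(ξ, ζ) = ⟨G, ζ⟩_F` for all `ζ`), and `ξ` is characterized as the unique solution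
of the linear system `A₁ ξ M₁ + ξ M₂ = G`. -/
theorem stmt_19 (n p r : ℕ) (A : Matrix (Fin n) (Fin n) ℝ) (hA : IsUnit A)
    (B : Matrix (Fin n) (Fin p) ℝ) (Y : Matrix (Fin n) (Fin r) ℝ) (hY : Y.rank = r)
    (G : Matrix (Fin n) (Fin r) ℝ) :
    (∃! ξ : Matrix (Fin n) (Fin r) ℝ,
        ∀ ζ : Matrix (Fin n) (Fin r) ℝ, gbar A B Y ξ ζ = Matrix.trace (Gᵀ * ζ)) ∧
    (∀ ξ : Matrix (Fin n) (Fin r) ℝ,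
        (∀ ζ : Matrix (Fin n) (Fin r) ℝ, gbar A B Y ξ ζ = Matrix.trace (Gᵀ * ζ)) ↔
        (A * Aᵀ + B * Bᵀ * Y * Yᵀ * Y * Yᵀ * B * Bᵀ) * ξ * (Yᵀ * Y) +
          ξ * (Yᵀ * A * Aᵀ * Y + Yᵀ * B * Bᵀ * Y * Yᵀ * Y * Yᵀ * B * Bᵀ * Y) = G) := by
  have hrep : ∀ ξ, (∀ ζ, gbar A B Y ξ ζ = (Gᵀ * ζ).trace) ↔ gbarOp A B Y ξ = G := fun ξ => by
    simp only [gbar_eq_trace_gbarOp, forall_trace_transpose_mul_eq_iff]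
  refine ⟨?_, hrep⟩
  simpa only [hrep] using (gbarOp_bijective B hA hY).existsUnique G
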